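/- Let $\alpha\in(0,1)$, $p\geq 1$, and nonnegative integers $s_0,s_1,\ldots,s_p$ with $s=\sum_{k=0}^p s_k$. Define $\pi(A_0,A_0)=[1-(1-\alpha)^{s_0}](1-\alpha)^{\sum_{k=1}^p s_k}$ and, for $j\in\{1,\ldots,p\}$, $\pi(A_0,A_j)=[1-(1-\alpha)^{s_j}]\sum_{k=0}^{p-1}\frac{1}{k+1}\sum_{\{j_1,\ldots,j_k\}\subseteq\{1,\ldots,p\}\setminus\{j\}}\prod_{t=1}^k[1-(1-\alpha)^{s_{j_t}}]\prod_{l\notin\{j,j_1,\ldots,j_k\}, l\geq 1}(1-\alpha)^{s_l}$. Then $(1-\alpha)^{s} = 1-\sum_{k=0}^p \pi(A_0,A_k)$. -/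

import Mathlib

open Finset

lemma key_lemma (I : Finset ℕ) (q x : ℕ → ℝ) (h : ∀ i ∈ I, q i + x i = 1) :
    ∑ j ∈ I, ∑ T ∈ (I \ {j}).powerset,
        (1 / ((T.card : ℝ) + 1)) * (q j * ((∏ i ∈ T, q i) * ∏ l ∈ I \ insert j T, x l))
      = 1 - ∏ i ∈ I, x i := by
  classical
  have h1 : (1:ℝ) - ∏ i ∈ I, x i = ∏ i ∈ I, (q i + x i) - ∏ i ∈ I, x i := by
    rw [Finset.prod_congr rfl h, Finset.prod_const_one]
  rw [h1, Finset.prod_add]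
  have hmem : (∅ : Finset ℕ) ∈ I.powerset := by simp
  rw [← Finset.add_sum_erase _ _ hmem]
  simp only [Finset.prod_empty, Finset.sdiff_empty, one_mul, add_sub_cancel_left]
  have hR : ∑ S ∈ I.powerset.erase ∅, ((∏ i ∈ S, q i) * ∏ l ∈ I \ S, x l)
      = ∑ S ∈ I.powerset.erase ∅, ∑ j ∈ S,
          (1 / (S.card : ℝ)) * ((∏ i ∈ S, q i) * ∏ l ∈ I \ S, x l) := by
    refine Finset.sum_congr rfl fun S hS => ?_
    have hne : S.Nonempty := Finset.nonempty_iff_ne_empty.2 (Finset.ne_of_mem_erase hS)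
    have hc : (S.card : ℝ) ≠ 0 := Nat.cast_ne_zero.2 (Finset.card_ne_zero.2 hne)
    rw [Finset.sum_const, nsmul_eq_mul]
    field_simp
  rw [hR, Finset.sum_sigma', Finset.sum_sigma']
  refine Finset.sum_bij' (fun a _ => (⟨insert a.1 a.2, a.1⟩ : Σ _ : Finset ℕ, ℕ))
    (fun b _ => (⟨b.2, b.1.erase b.2⟩ : Σ _ : ℕ, Finset ℕ)) ?_ ?_ ?_ ?_ ?_
  · rintro ⟨j, T⟩ ha
    simp only [Finset.mem_sigma, Finset.mem_powerset] at ha ⊢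
    obtain ⟨hj, hT⟩ := ha
    have hTI : T ⊆ I := hT.trans (Finset.sdiff_subset)
    refine ⟨Finset.mem_erase.2 ⟨?_, Finset.mem_powerset.2 ?_⟩, ?_⟩
    · exact (Finset.insert_nonempty _ _).ne_empty
    · exact Finset.insert_subset hj hTI
    · exact Finset.mem_insert_self _ _
  · rintro ⟨S, j⟩ hb
    simp only [Finset.mem_sigma, Finset.mem_erase, Finset.mem_powerset] at hb ⊢
    obtain ⟨⟨hSne, hSI⟩, hj⟩ := hb
    refine ⟨hSI hj, ?_⟩
    rw [Finset.sdiff_singleton_eq_erase]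
    exact Finset.erase_subset_erase _ hSI
  · rintro ⟨j, T⟩ ha
    simp only [Finset.mem_sigma, Finset.mem_powerset] at ha
    have hjT : j ∉ T := fun hjc => (Finset.mem_sdiff.1 (ha.2 hjc)).2 (Finset.mem_singleton_self j)
    simp [Finset.erase_insert hjT]
  · rintro ⟨S, j⟩ hb
    simp only [Finset.mem_sigma, Finset.mem_erase, Finset.mem_powerset] at hb
    simp [Finset.insert_erase hb.2]
  · rintro ⟨j, T⟩ ha
    simp only [Finset.mem_sigma, Finset.mem_powerset] at ha
    have hjT : j ∉ T := fun hjc => (Finset.mem_sdiff.1 (ha.2 hjc)).2 (Finset.mem_singleton_self j)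
    simp only
    rw [Finset.card_insert_of_notMem hjT, Finset.prod_insert hjT]
    push_cast
    ring

/-- The probability that an easy-to-match agent is incompatible with every agent
in the pool equals one minus the total probability that it is matched to some type. -/
theorem stmt0 (α : ℝ) (hα : α ∈ Set.Ioo (0:ℝ) 1) (p : ℕ) (hp : 1 ≤ p)
    (s : ℕ → ℕ) :
    (1 - α) ^ (∑ k ∈ Finset.range (p + 1), s k) =
      1 - (((1 - (1 - α) ^ (s 0)) * (1 - α) ^ (∑ k ∈ Finset.Icc 1 p, s k))
        + ∑ j ∈ Finset.Icc 1 p,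
            (1 - (1 - α) ^ (s j)) *
              ∑ k ∈ Finset.range p, (1 / ((k : ℝ) + 1)) *
                ∑ T ∈ (Finset.Icc 1 p \ {j}).powersetCard k,
                  ((∏ i ∈ T, (1 - (1 - α) ^ (s i))) *
                   (∏ l ∈ Finset.Icc 1 p \ insert j T, (1 - α) ^ (s l)))) := by
  classical
  set x : ℕ → ℝ := fun i => (1 - α) ^ (s i) with hx
  set q : ℕ → ℝ := fun i => 1 - x i with hq
  set I : Finset ℕ := Finset.Icc 1 p with hI
  -- rewrite each inner (sum over k, powersetCard) as a sum over powerset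
  have hcard : I.card = p := by simp [hI]
  have hinner : ∀ j ∈ I,
      ∑ k ∈ Finset.range p, (1 / ((k : ℝ) + 1)) *
          ∑ T ∈ (I \ {j}).powersetCard k,
            ((∏ i ∈ T, q i) * (∏ l ∈ I \ insert j T, x l))
        = ∑ T ∈ (I \ {j}).powerset,
            (1 / ((T.card : ℝ) + 1)) * ((∏ i ∈ T, q i) * ∏ l ∈ I \ insert j T, x l) := by
    intro j hj
    have hcard' : (I \ {j}).card = p - 1 := by
      rw [Finset.sdiff_singleton_eq_erase, Finset.card_erase_of_mem hj, hcard]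
    have hrange : (I \ {j}).card + 1 = p := by omega
    rw [Finset.powerset_card_biUnion, Finset.sum_biUnion ((Finset.pairwise_disjoint_powersetCard _).set_pairwise _), hrange]
    refine Finset.sum_congr rfl fun k _ => ?_
    rw [Finset.mul_sum]
    refine Finset.sum_congr rfl fun T hT => ?_
    rw [(Finset.mem_powersetCard.1 hT).2]
  have hkey := key_lemma I q x (fun i _ => by simp [hq])
  have hsum : ∑ j ∈ I, q j *
      ∑ T ∈ (I \ {j}).powerset,
        (1 / ((T.card : ℝ) + 1)) * ((∏ i ∈ T, q i) * ∏ l ∈ I \ insert j T, x l)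
      = 1 - ∏ i ∈ I, x i := by
    rw [← hkey]
    refine Finset.sum_congr rfl fun j _ => ?_
    rw [Finset.mul_sum]
    refine Finset.sum_congr rfl fun T _ => ?_
    ring
  have hP : ∏ i ∈ I, x i = (1 - α) ^ (∑ k ∈ Finset.Icc 1 p, s k) := by
    rw [hI, hx]
    exact Finset.prod_pow_eq_pow_sum _ _ _
  have hmain : ∑ j ∈ I, q j *
      ∑ k ∈ Finset.range p, (1 / ((k : ℝ) + 1)) *
        ∑ T ∈ (I \ {j}).powersetCard k,
          ((∏ i ∈ T, q i) * (∏ l ∈ I \ insert j T, x l))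
      = 1 - ∏ i ∈ I, x i := by
    rw [← hsum]
    exact Finset.sum_congr rfl fun j hj => by rw [hinner j hj]
  have hsplit : ∑ k ∈ Finset.range (p + 1), s k = s 0 + ∑ k ∈ Finset.Icc 1 p, s k := by
    have h0 : Finset.Icc 0 p = insert 0 (Finset.Icc 1 p) := by
      ext i; simp; omega
    rw [Finset.range_eq_Ico, Finset.Ico_add_one_right_eq_Icc, h0, Finset.sum_insert (by simp)]
  rw [hsplit, pow_add]
  calc (1 - α) ^ (s 0) * (1 - α) ^ (∑ k ∈ Finset.Icc 1 p, s k)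
      = 1 - ((1 - (1-α)^(s 0)) * (1 - α) ^ (∑ k ∈ Finset.Icc 1 p, s k)
          + (1 - ∏ i ∈ I, x i)) := by rw [hP]; ring
    _ = _ := by rw [← hmain]
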